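/- Assume β > 0, β_year > 0, Cov(Y, ε) = 0, Var(Y) > 0, the Gram determinant Var(ln D)·Var(Y) − Cov(ln D, Y)² is positive, and the selection covariance satisfies Cov(ln D, ε) > −Var(ln D − (Cov(ln D, Y)/Var(Y))·Y). Let (b, b_year) satisfy the population normal equations Cov(ln D, ln L) = −b·Var(ln D) − b_year·Cov(ln D, Y) and Cov(Y − Y₀, ln L) = −b·Cov(ln D, Y) − b_year·Var(Y) for ln L generated by the DGP ln L = ln B − β·ln D − β_year·(Y − Y₀) − β·ε. Then the bias of the estimated rate of algorithmic progress admits the representation b_year/b − β_year/β = −(β_year/β + Cov(ln D, Y)/Var(Y)) · Cov(ln D, ε) / (Var(ln D − (Cov(ln D, Y)/Var(Y))·Y) + Cov(ln D, ε)). -/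

import Mathlib

/-!
Both the data-generating process and the normal equations are linear, so the covariances in the
normal equations reduce, by bilinearity and `Cov(Y, ε) = 0`, to a 2×2 linear system in `(b, b_year)`
whose only deviation from the one solved by `(β, β_year)` is the selection term `β · Cov(ln D, ε)`.
Eliminating `b_year` (partialling `Y` out of `ln D`) gives `(b - β) · V = β · Cov(ln D, ε)`, with `V`
the variance of the residual of `ln D` on `Y`; back-substituting gives `b_year`, and the bias
formula is then an identity of rational functions.
-/

open MeasureTheory ProbabilityTheory

/-- Covariance of two real-valued random variables with respect to a measure `μ`. -/
noncomputable def cov {Ω : Type*} [MeasurableSpace Ω] (μ : Measure Ω) (X Y : Ω → ℝ) : ℝ :=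
  ∫ ω, (X ω - ∫ x, X x ∂μ) * (Y ω - ∫ x, Y x ∂μ) ∂μ

theorem cov_eq_covariance {Ω : Type*} [MeasurableSpace Ω] (μ : Measure Ω) (X Y : Ω → ℝ) :
    cov μ X Y = cov[X, Y; μ] := rfl

section

variable {Ω : Type*} [MeasurableSpace Ω] {μ : Measure Ω} {W X Y Z : Ω → ℝ}

theorem covariance_affine_right [IsProbabilityMeasure μ] (hW : MemLp W 2 μ) (hX : MemLp X 2 μ)
    (hY : MemLp Y 2 μ) (hZ : MemLp Z 2 μ) (a b c d : ℝ) :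
    cov[W, fun ω ↦ a + b * X ω + c * Y ω + d * Z ω; μ] =
      b * cov[W, X; μ] + c * cov[W, Y; μ] + d * cov[W, Z; μ] := by
  change cov[W, (fun _ ↦ a) + (fun ω ↦ b * X ω) + (fun ω ↦ c * Y ω) + (fun ω ↦ d * Z ω); μ] = _
  have hbX := hX.const_mul b
  have hcY := hY.const_mul c
  rw [covariance_add_right hW (((memLp_const a).add hbX).add hcY) (hZ.const_mul d),
    covariance_add_right hW ((memLp_const a).add hbX) hcY,
    covariance_add_right hW (memLp_const a) hbX, covariance_const_right,
    covariance_const_mul_right, covariance_const_mul_right, covariance_const_mul_right, zero_add]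

theorem variance_sub_covariance_div_variance_mul [IsFiniteMeasure μ]
    (hX : MemLp X 2 μ) (hY : MemLp Y 2 μ) :
    Var[fun ω ↦ X ω - cov[X, Y; μ] / Var[Y; μ] * Y ω; μ] =
      Var[X; μ] - cov[X, Y; μ] ^ 2 / Var[Y; μ] := by
  rw [variance_fun_sub hX (hY.const_mul _), variance_const_mul, covariance_const_mul_right]
  rcases eq_or_ne Var[Y; μ] 0 with h | h
  · simp [h]
  · field_simp
    ring

end

theorem rate_bias_eq_of_reduced_normal_equations {β βy b b_y V Syy Sxy e : ℝ} (hβ : β ≠ 0)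
    (hSyy : Syy ≠ 0) (hVe : V + e ≠ 0) (hb : (b - β) * V = β * e)
    (hby : (b_y - βy) * Syy = (β - b) * Sxy) :
    b_y / b - βy / β = -(βy / β + Sxy / Syy) * e / (V + e) := by
  have hV : V ≠ 0 := by
    rintro rfl
    simp_all
  have hb' : b = β * (V + e) / V := by
    field_simp
    linear_combination hb
  have hby' : b_y = βy + (β - b) * Sxy / Syy := by
    field_simp
    linear_combination hby
  rw [hby', hb']
  field_simp
  ring

theorem bias_residual_representation_general {Ω : Type*} [MeasurableSpace Ω] (μ : Measure Ω) [IsProbabilityMeasure μ]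
    (X Y ε : Ω → ℝ) (hX : MemLp X 2 μ) (hY : MemLp Y 2 μ) (hε : MemLp ε 2 μ)
    (β β_year lnB Y₀ : ℝ) (lnL : Ω → ℝ)
    (hlnL : ∀ ω, lnL ω = lnB - β * X ω - β_year * (Y ω - Y₀) - β * ε ω)
    (hβ : 0 < β) (hYε : cov μ Y ε = 0)
    (hVarY : 0 < variance Y μ)
    (hsel : cov μ X ε > -variance (fun ω => X ω - (cov μ X Y / variance Y μ) * Y ω) μ)
    (b b_year : ℝ)
    (h1 : cov μ X lnL = -b * variance X μ - b_year * cov μ X Y)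
    (h2 : cov μ (fun ω => Y ω - Y₀) lnL = -b * cov μ X Y - b_year * variance Y μ) :
    b_year / b - β_year / β =
      -(β_year / β + cov μ X Y / variance Y μ) * cov μ X ε /
        (variance (fun ω => X ω - (cov μ X Y / variance Y μ) * Y ω) μ + cov μ X ε) := by
  simp only [cov_eq_covariance] at *
  have hL : lnL = fun ω ↦ (lnB + β_year * Y₀) + -β * X ω + -β_year * Y ω + -β * ε ω :=
    funext fun ω ↦ by rw [hlnL]; ring
  rw [hL, covariance_affine_right hX hX hY hε, covariance_self hX.aemeasurable] at h1
  rw [covariance_sub_const_left (hY.integrable one_le_two), hL,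
    covariance_affine_right hY hX hY hε, covariance_self hY.aemeasurable, covariance_comm Y X,
    hYε] at h2
  rw [variance_sub_covariance_div_variance_mul hX hY] at hsel ⊢
  refine rate_bias_eq_of_reduced_normal_equations hβ.ne' hVarY.ne' (by linarith) ?_
    (by linear_combination h2)
  field_simp
  linear_combination Var[Y; μ] * h1 - cov[X, Y; μ] * h2

/-- Residual-variance representation of the bias of the estimated rate of
algorithmic progress. -/
theorem bias_residual_representation {Ω : Type*} [MeasurableSpace Ω] (μ : Measure Ω) [IsProbabilityMeasure μ]
    (X Y ε : Ω → ℝ) (hX : MemLp X 2 μ) (hY : MemLp Y 2 μ) (hε : MemLp ε 2 μ)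
    (β β_year lnB Y₀ : ℝ) (lnL : Ω → ℝ)
    (hlnL : ∀ ω, lnL ω = lnB - β * X ω - β_year * (Y ω - Y₀) - β * ε ω)
    (hβ : 0 < β) (hβyear : 0 < β_year) (hYε : cov μ Y ε = 0)
    (hVarY : 0 < variance Y μ)
    (hGram : 0 < variance X μ * variance Y μ - (cov μ X Y) ^ 2)
    (hsel : cov μ X ε > -variance (fun ω => X ω - (cov μ X Y / variance Y μ) * Y ω) μ)
    (b b_year : ℝ)
    (h1 : cov μ X lnL = -b * variance X μ - b_year * cov μ X Y)
    (h2 : cov μ (fun ω => Y ω - Y₀) lnL = -b * cov μ X Y - b_year * variance Y μ) :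
    b_year / b - β_year / β =
      -(β_year / β + cov μ X Y / variance Y μ) * cov μ X ε /
        (variance (fun ω => X ω - (cov μ X Y / variance Y μ) * Y ω) μ + cov μ X ε) :=
  bias_residual_representation_general μ X Y ε hX hY hε β β_year lnB Y₀ lnL hlnL hβ hYε hVarY hsel b
    b_year h1 h2
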